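/- The map s ↦ Tr[ρ^s σ^(1-s)] is convex on (0,1) for any positive semi-definite operators ρ, σ on a finite-dimensional Hilbert space, and consequently for any such ρ, σ, inf_{0<s<1} (1/2)(Tr[ρ^s σ^(1-s)] + Tr[ρ^(1-s) σ^s]) = Tr[ρ^(1/2) σ^(1/2)]. -/
import Mathlib


open Matrix
open scoped ComplexOrder


lemma aux_term_convex (p q : ℝ) (hp : 0 ≤ p) (hq : 0 ≤ q) :
    ConvexOn ℝ (Set.Ioo (0:ℝ) 1) (fun s : ℝ => p ^ s * q ^ (1 - s)) := by
  rcases eq_or_lt_of_le hp with hp0 | hp0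
  · refine ⟨convex_Ioo 0 1, ?_⟩
    intro x hx y hy a b ha hb hab
    have hmem := (convex_Ioo (0:ℝ) 1) hx hy ha hb hab
    simp only [smul_eq_mul] at hmem ⊢
    rw [← hp0, Real.zero_rpow (ne_of_gt hx.1), Real.zero_rpow (ne_of_gt hy.1),
      Real.zero_rpow (ne_of_gt hmem.1)]
    simp
  rcases eq_or_lt_of_le hq with hq0 | hq0
  · refine ⟨convex_Ioo 0 1, ?_⟩
    intro x hx y hy a b ha hb hab
    have hmem := (convex_Ioo (0:ℝ) 1) hx hy ha hb hab
    simp only [smul_eq_mul] at hmem ⊢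
    rw [← hq0, Real.zero_rpow (by linarith [hx.2] : (1:ℝ) - x ≠ 0),
      Real.zero_rpow (by linarith [hy.2] : (1:ℝ) - y ≠ 0),
      Real.zero_rpow (by linarith [hmem.2] : (1:ℝ) - (a*x+b*y) ≠ 0)]
    simp
  · have hfun : (fun s : ℝ => p ^ s * q ^ (1 - s)) =
        Real.exp ∘ (AffineMap.lineMap (Real.log q) (Real.log p) : ℝ →ᵃ[ℝ] ℝ) := by
      funext s
      simp only [Function.comp_apply, AffineMap.lineMap_apply_module', smul_eq_mul]
      rw [Real.rpow_def_of_pos hp0, Real.rpow_def_of_pos hq0, ← Real.exp_add]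
      ring_nf
    rw [hfun]
    have := convexOn_exp.comp_affineMap (AffineMap.lineMap (Real.log q) (Real.log p) : ℝ →ᵃ[ℝ] ℝ)
    exact this.subset (Set.subset_univ _) (convex_Ioo 0 1) |>.subset
      (by simp) (convex_Ioo 0 1)

lemma aux_sum_convex {ι : Type*} (t : Finset ι) (s : Set ℝ) (hs : Convex ℝ s)
    (f : ι → ℝ → ℝ) (hf : ∀ i ∈ t, ConvexOn ℝ s (f i)) :
    ConvexOn ℝ s (fun x => ∑ i ∈ t, f i x) := by
  classical
  induction t using Finset.cons_induction with
  | empty => simpa using convexOn_const 0 hs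
  | cons i t hi ih =>
    simp only [Finset.sum_cons]
    exact (hf i (Finset.mem_cons_self i t)).add
      (ih fun j hj => hf j (Finset.mem_cons_of_mem hj))

lemma aux_trace_diag {n : ℕ} (M : Matrix (Fin n) (Fin n) ℂ) (da db : Fin n → ℂ) :
    trace (diagonal da * M * diagonal db * star M)
      = ∑ j, ∑ k, da j * db k * (M j k * (starRingEnd ℂ) (M j k)) := by
  rw [trace]
  simp only [diag_apply, mul_apply, diagonal_apply, star_apply, star_eq_conjTranspose,
    conjTranspose_apply, Finset.sum_mul, Finset.mul_sum]
  simp only [ite_mul, zero_mul, mul_ite, mul_zero, RCLike.star_def]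
  simp [Finset.sum_ite_eq, Finset.sum_ite_eq']
  refine Finset.sum_congr rfl fun j _ => Finset.sum_congr rfl fun k _ => ?_
  ring

lemma aux_trace_re {n : ℕ} (U V : Matrix (Fin n) (Fin n) ℂ) (a b : Fin n → ℝ) :
    (trace (U * diagonal ((Complex.ofReal) ∘ a) * star U *
        (V * diagonal ((Complex.ofReal) ∘ b) * star V))).re
      = ∑ j, ∑ k, Complex.normSq (((star U) * V) j k) * (a j * b k) := by
  have h1 : U * diagonal ((Complex.ofReal) ∘ a) * star U *
        (V * diagonal ((Complex.ofReal) ∘ b) * star V)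
      = U * (diagonal ((Complex.ofReal) ∘ a) * (star U * V) * diagonal ((Complex.ofReal) ∘ b)
          * star V) := by
    simp only [mul_assoc]
  have h4 : diagonal ((Complex.ofReal) ∘ a) * (star U * V) * diagonal ((Complex.ofReal) ∘ b)
        * star V * U
      = diagonal ((Complex.ofReal) ∘ a) * (star U * V) * diagonal ((Complex.ofReal) ∘ b)
        * star (star U * V) := by
    simp only [mul_assoc]
    rw [Matrix.star_mul, star_star]
  rw [h1, trace_mul_comm, h4, aux_trace_diag]
  rw [Complex.re_sum]
  refine Finset.sum_congr rfl fun j _ => ?_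
  rw [Complex.re_sum]
  refine Finset.sum_congr rfl fun k _ => ?_
  simp only [Function.comp_apply, Complex.mul_conj]
  rw [← Complex.ofReal_mul, ← Complex.ofReal_mul, Complex.ofReal_re]
  ring

/-- Fractional power of a matrix via the continuous functional calculus
(`Real.rpow`, so `0^γ = 0` for `γ ≠ 0`). -/
noncomputable def mpow {n : ℕ} (A : Matrix (Fin n) (Fin n) ℂ) (r : ℝ) : Matrix (Fin n) (Fin n) ℂ :=
  cfc (fun x : ℝ => x ^ r) A

/-- For positive semi-definite `ρ, σ` on a finite-dimensional Hilbert space, the map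
`s ↦ Tr[ρ^s σ^(1-s)]` is convex on `(0,1)`, and consequently
`inf_{0<s<1} ½(Tr[ρ^s σ^(1-s)] + Tr[ρ^(1-s) σ^s]) = Tr[ρ^(1/2) σ^(1/2)]`. -/
theorem stmt12 {n : ℕ} (ρ σ : Matrix (Fin n) (Fin n) ℂ)
    (hρ : ρ.PosSemidef) (hσ : σ.PosSemidef) :
    ConvexOn ℝ (Set.Ioo (0:ℝ) 1) (fun s : ℝ => (trace (mpow ρ s * mpow σ (1 - s))).re) ∧
    (⨅ s : Set.Ioo (0:ℝ) 1,
        (1/2) * ((trace (mpow ρ (s : ℝ) * mpow σ (1 - (s : ℝ)))).re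
               + (trace (mpow ρ (1 - (s : ℝ)) * mpow σ (s : ℝ))).re)) =
      (trace (mpow ρ (1/2) * mpow σ (1/2))).re := by
  haveI : Nonempty (Set.Ioo (0:ℝ) 1) := ⟨⟨1/2, by norm_num⟩⟩
  set U : Matrix (Fin n) (Fin n) ℂ := (hρ.1.eigenvectorUnitary : Matrix (Fin n) (Fin n) ℂ) with hU
  set V : Matrix (Fin n) (Fin n) ℂ := (hσ.1.eigenvectorUnitary : Matrix (Fin n) (Fin n) ℂ) with hV
  set p : Fin n → ℝ := hρ.1.eigenvalues with hp
  set q : Fin n → ℝ := hσ.1.eigenvalues with hq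
  have hmρ : ∀ s : ℝ, mpow ρ s = U * diagonal ((Complex.ofReal) ∘ fun i => p i ^ s) * star U := by
    intro s
    rw [mpow, hρ.1.cfc_eq]
    rfl
  have hmσ : ∀ s : ℝ, mpow σ s = V * diagonal ((Complex.ofReal) ∘ fun i => q i ^ s) * star V := by
    intro s
    rw [mpow, hσ.1.cfc_eq]
    rfl
  have key : ∀ s : ℝ, (trace (mpow ρ s * mpow σ (1 - s))).re
      = ∑ j, ∑ k, Complex.normSq ((star U * V) j k) * (p j ^ s * q k ^ (1 - s)) := by
    intro s
    rw [hmρ s, hmσ (1 - s), aux_trace_re]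
  have hconv : ConvexOn ℝ (Set.Ioo (0:ℝ) 1)
      (fun s : ℝ => (trace (mpow ρ s * mpow σ (1 - s))).re) := by
    have hfun : (fun s : ℝ => (trace (mpow ρ s * mpow σ (1 - s))).re)
        = fun s : ℝ => ∑ j, ∑ k, Complex.normSq ((star U * V) j k) * (p j ^ s * q k ^ (1 - s)) :=
      funext key
    rw [hfun]
    apply aux_sum_convex _ _ (convex_Ioo 0 1)
    intro j _
    apply aux_sum_convex _ _ (convex_Ioo 0 1)
    intro k _
    simpa [smul_eq_mul] using
      (aux_term_convex (p j) (q k) (hρ.eigenvalues_nonneg j) (hσ.eigenvalues_nonneg k)).smul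
        (Complex.normSq_nonneg ((star U * V) j k))
  refine ⟨hconv, ?_⟩
  set f : ℝ → ℝ := fun s => (trace (mpow ρ s * mpow σ (1 - s))).re with hfdef
  have hsymm : ∀ s : ℝ, (trace (mpow ρ (1 - s) * mpow σ s)).re = f (1 - s) := by
    intro s
    simp only [hfdef]
    rw [sub_sub_cancel]
  have hkey : ∀ s ∈ Set.Ioo (0:ℝ) 1, f (1/2) ≤ (1/2) * (f s + f (1 - s)) := by
    intro s hs
    have hs' : (1:ℝ) - s ∈ Set.Ioo (0:ℝ) 1 := ⟨by linarith [hs.2], by linarith [hs.1]⟩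
    have h := hconv.2 hs hs' (by norm_num : (0:ℝ) ≤ 1/2) (by norm_num : (0:ℝ) ≤ 1/2)
      (by norm_num : (1/2 : ℝ) + 1/2 = 1)
    simp only [smul_eq_mul] at h
    have heq : (1/2 : ℝ) * s + 1/2 * (1 - s) = 1/2 := by ring
    rw [heq] at h
    linarith
  have hbdd : BddBelow (Set.range fun s : Set.Ioo (0:ℝ) 1 =>
      (1/2) * (f (s : ℝ) + (trace (mpow ρ (1 - (s : ℝ)) * mpow σ (s : ℝ))).re)) := by
    refine ⟨f (1/2), ?_⟩
    rintro x ⟨⟨s, hs⟩, rfl⟩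
    simp only
    rw [hsymm]
    exact hkey s hs
  have hf12 : f (1/2) = (trace (mpow ρ (1/2) * mpow σ (1/2))).re := by
    show (trace (mpow ρ (1/2) * mpow σ (1 - 1/2))).re = _
    norm_num
  apply le_antisymm
  · have h12 : ((1:ℝ)/2) ∈ Set.Ioo (0:ℝ) 1 := by norm_num
    have hle := ciInf_le hbdd (⟨1/2, h12⟩ : Set.Ioo (0:ℝ) 1)
    refine le_trans hle ?_
    rw [hsymm]
    have : (1:ℝ) - 1/2 = 1/2 := by norm_num
    rw [this]
    rw [← hf12]
    linarith
  · rw [← hf12]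
    refine le_ciInf ?_
    rintro ⟨s, hs⟩
    simp only
    rw [hsymm]
    exact hkey s hs
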